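/- arXiv:0906.5468 — 6 statements merged into one kernel-verified Lean document; each statement's English description precedes it below -/
import Mathlib

section
/- Let A be a ℂ-vector space, let i ≥ 2, and let m₀, m₁, …, m_{i−1} : A × A → A be ℂ-bilinear maps such that m₀ is associative and for every n with 1 ≤ n ≤ i−1 the order-n associativity condition holds: ∑_{j=0}^{n} [ m_j(m_{n−j}(a,b), c) − m_j(a, m_{n−j}(b,c)) ] = 0 for all a, b, c ∈ A. Define the ℂ-trilinear map ω_i(a,b,c) := −∑_{j=1}^{i−1} [ m_{i−j}(a, m_j(b,c)) − m_{i−j}(m_j(a,b), c) ]. Then ω_i is a Hochschild 3-cocycle with respect to m₀: for all a, b, c, e ∈ A, m₀(a, ω_i(b,c,e)) − ω_i(m₀(a,b), c, e) + ω_i(a, m₀(b,c), e) − ω_i(a, b, m₀(c,e)) + m₀(ω_i(a,b,c), e) = 0. -/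
/-- The obstruction `ω_i(a,b,c) := −∑_{j=1}^{i−1} [ m_{i−j}(a, m_j(b,c)) − m_{i−j}(m_j(a,b), c) ]`
to continuing a formal deformation of a product to order `i`. -/
noncomputable def obstruction {A : Type*} [AddCommGroup A] [Module ℂ A]
    (m : ℕ → A →ₗ[ℂ] A →ₗ[ℂ] A) (i : ℕ) (a b c : A) : A :=
  -∑ j ∈ Finset.Icc 1 (i - 1), (m (i - j) a (m j b c) - m (i - j) (m j a b) c)

/-!
Truncate the deformation to `m'` with `m'ᵢ = 0` and put `μ = ∑ λᵏ m'ₖ`. Teichmüller's identity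
`δ_μ (assoc μ) = 0` holds for every bilinear product; its `λⁱ`-coefficient is
`∑_{p+t=i} δ_{m'ₚ} Aₜ`, where `Aₜ` is the `λᵗ`-coefficient of `assoc μ`. Here `Aₜ = 0` for
`1 ≤ t ≤ i - 1` by hypothesis, `m'ᵢ = 0`, and `Aᵢ = ωᵢ`, so only `δ_{m₀} ωᵢ = 0` survives.
-/

open Finset

namespace Finset.Nat

theorem sum_antidiagonalTuple_comp_perm {M : Type*} [AddCommMonoid M] {k : ℕ}
    (σ : Equiv.Perm (Fin k)) (n : ℕ) (f : (Fin k → ℕ) → M) :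
    ∑ x ∈ antidiagonalTuple k n, f (x ∘ σ) = ∑ x ∈ antidiagonalTuple k n, f x := by
  refine sum_nbij' (· ∘ σ) (· ∘ σ.symm) ?_ ?_ ?_ ?_ (fun _ _ => rfl) <;>
    intro x hx <;> rw [mem_antidiagonalTuple] at hx
  · exact mem_antidiagonalTuple.2 ((Equiv.sum_comp σ x).trans hx)
  · exact mem_antidiagonalTuple.2 ((Equiv.sum_comp σ.symm x).trans hx)
  · ext; simp
  · ext; simp

theorem sum_antidiagonalTuple_three {M : Type*} [AddCommMonoid M] (n : ℕ)
    (f : (Fin 3 → ℕ) → M) :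
    ∑ x ∈ antidiagonalTuple 3 n, f x
      = ∑ pt ∈ antidiagonal n, ∑ qr ∈ antidiagonal pt.2, f ![pt.1, qr.1, qr.2] := by
  rw [sum_sigma']
  refine sum_nbij' (fun x => ⟨(x 0, x 1 + x 2), (x 1, x 2)⟩)
    (fun y => ![y.1.1, y.2.1, y.2.2]) ?_ ?_ ?_ ?_ ?_
  · intro x hx
    simp only [mem_antidiagonalTuple, Fin.sum_univ_three] at hx
    simp [← hx, add_assoc]
  · rintro ⟨⟨p, t⟩, ⟨q, r⟩⟩ h
    simp only [mem_sigma, HasAntidiagonal.mem_antidiagonal] at h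
    simp [mem_antidiagonalTuple, Fin.sum_univ_three]
    omega
  · intro x _
    ext j; fin_cases j <;> rfl
  · rintro ⟨⟨p, t⟩, ⟨q, r⟩⟩ h
    simp only [mem_sigma, HasAntidiagonal.mem_antidiagonal] at h
    simp [h.2]
  · intro x _
    congr; ext j; fin_cases j <;> rfl

end Finset.Nat

section Deformation

variable {R M : Type*} [CommRing R] [AddCommGroup M] [Module R M]

def mixedAssociator (μ ν : M →ₗ[R] M →ₗ[R] M) (a b c : M) : M :=
  μ (ν a b) c - μ a (ν b c)

def hochschildDiff (μ : M →ₗ[R] M →ₗ[R] M) (ψ : M → M → M → M) (a b c e : M) : M :=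
  μ a (ψ b c e) - ψ (μ a b) c e + ψ a (μ b c) e - ψ a b (μ c e) + μ (ψ a b c) e

/-- The `λⁿ`-coefficient of the associator of `∑ λᵏ mₖ`. -/
def associatorCoeff (m : ℕ → M →ₗ[R] M →ₗ[R] M) (n : ℕ) (a b c : M) : M :=
  ∑ x ∈ antidiagonal n, mixedAssociator (m x.1) (m x.2) a b c

theorem hochschildDiff_sum {ι : Type*} (μ : M →ₗ[R] M →ₗ[R] M) (s : Finset ι)
    (ψ : ι → M → M → M → M) (a b c e : M) :
    hochschildDiff μ (fun a b c => ∑ k ∈ s, ψ k a b c) a b c e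
      = ∑ k ∈ s, hochschildDiff μ (ψ k) a b c e := by
  simp only [hochschildDiff, map_sum, LinearMap.sum_apply, sum_add_distrib, sum_sub_distrib]

theorem hochschildDiff_associatorCoeff (μ : M →ₗ[R] M →ₗ[R] M) (m : ℕ → M →ₗ[R] M →ₗ[R] M)
    (n : ℕ) (a b c e : M) :
    hochschildDiff μ (associatorCoeff m n) a b c e
      = ∑ x ∈ antidiagonal n, hochschildDiff μ (mixedAssociator (m x.1) (m x.2)) a b c e :=
  hochschildDiff_sum μ _ _ a b c e

/-- Multilinearised Teichmüller identity: the right side cancels once summed over all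
relabellings of `(p, q, r)`. -/
theorem hochschildDiff_mixedAssociator (p q r : M →ₗ[R] M →ₗ[R] M) (a b c e : M) :
    hochschildDiff p (mixedAssociator q r) a b c e
      = (p a (mixedAssociator q r b c e) + p (mixedAssociator q r a b c) e)
        - (q a (mixedAssociator r p b c e) + q (mixedAssociator r p a b c) e)
        + (q (p a b) (r c e) - q (r a b) (p c e)) := by
  simp only [hochschildDiff, mixedAssociator, map_sub, LinearMap.sub_apply]
  abel

theorem sum_antidiagonal_hochschildDiff_associatorCoeff (m : ℕ → M →ₗ[R] M →ₗ[R] M) (n : ℕ)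
    (a b c e : M) :
    ∑ x ∈ antidiagonal n, hochschildDiff (m x.1) (associatorCoeff m x.2) a b c e = 0 := by
  let outer : (Fin 3 → ℕ) → M := fun x =>
    m (x 0) a (mixedAssociator (m (x 1)) (m (x 2)) b c e)
      + m (x 0) (mixedAssociator (m (x 1)) (m (x 2)) a b c) e
  let middle : (Fin 3 → ℕ) → M := fun x => m (x 1) (m (x 0) a b) (m (x 2) c e)
  have cycle := Nat.sum_antidiagonalTuple_comp_perm (finRotate 3) n outer
  have swap := Nat.sum_antidiagonalTuple_comp_perm (Equiv.swap 0 2) n middle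
  calc ∑ x ∈ antidiagonal n, hochschildDiff (m x.1) (associatorCoeff m x.2) a b c e
      = ∑ x ∈ Nat.antidiagonalTuple 3 n,
          hochschildDiff (m (x 0)) (mixedAssociator (m (x 1)) (m (x 2))) a b c e := by
        simp only [hochschildDiff_associatorCoeff, Nat.sum_antidiagonalTuple_three]
        rfl
    _ = ∑ x ∈ Nat.antidiagonalTuple 3 n,
          (outer x - outer (x ∘ finRotate 3) + (middle x - middle (x ∘ Equiv.swap 0 2))) := by
        refine sum_congr rfl fun x _ => ?_
        rw [hochschildDiff_mixedAssociator]
        rfl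
    _ = 0 := by
        rw [sum_add_distrib, sum_sub_distrib, sum_sub_distrib, cycle, swap, sub_self, sub_self,
          add_zero]

theorem associatorCoeff_eq_sum_range (m : ℕ → M →ₗ[R] M →ₗ[R] M) (n : ℕ) (a b c : M) :
    associatorCoeff m n a b c
      = ∑ j ∈ range (n + 1), (m j (m (n - j) a b) c - m j a (m (n - j) b c)) :=
  Nat.sum_antidiagonal_eq_sum_range_succ (fun p q => mixedAssociator (m p) (m q) a b c) n

theorem associatorCoeff_update_of_lt (m : ℕ → M →ₗ[R] M →ₗ[R] M) {n i : ℕ} (h : n < i)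
    (μ : M →ₗ[R] M →ₗ[R] M) :
    associatorCoeff (Function.update m i μ) n = associatorCoeff m n := by
  funext a b c
  refine sum_congr rfl fun x hx => ?_
  have hx : x.1 + x.2 = n := by simpa using hx
  rw [Function.update_of_ne (by omega), Function.update_of_ne (by omega)]

theorem associatorCoeff_update_self_zero {A : Type*} [AddCommGroup A] [Module ℂ A]
    (m : ℕ → A →ₗ[ℂ] A →ₗ[ℂ] A) (i : ℕ) :
    associatorCoeff (Function.update m i 0) i = obstruction m i := by
  funext a b c
  rw [associatorCoeff, ← Nat.sum_antidiagonal_swap, Nat.sum_antidiagonal_eq_sum_range_succ_mk,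
    obstruction, ← sum_neg_distrib]
  have hsub : Icc 1 (i - 1) ⊆ range (i + 1) := fun j hj => by
    simp only [mem_Icc, mem_range] at hj ⊢; omega
  rw [← sum_subset hsub]
  · refine sum_congr rfl fun j hj => ?_
    have hj : 1 ≤ j ∧ j ≤ i - 1 := by simpa using hj
    rw [Prod.swap_prod_mk, Function.update_of_ne (show i - j ≠ i by omega),
      Function.update_of_ne (show j ≠ i by omega), mixedAssociator, neg_sub]
  · intro j hj hj'
    have hj : j = 0 ∨ j = i := by simp only [mem_range, mem_Icc] at hj hj'; omega
    rcases hj with rfl | rfl <;> simp [mixedAssociator]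

end Deformation

theorem obstruction_is_hochschild_three_cocycle_general {A : Type*} [AddCommGroup A] [Module ℂ A]
    (i : ℕ) (hi : 2 ≤ i) (m : ℕ → A →ₗ[ℂ] A →ₗ[ℂ] A)
    (hassoc : ∀ n : ℕ, 1 ≤ n → n ≤ i - 1 → ∀ a b c : A,
      ∑ j ∈ Finset.range (n + 1),
        (m j (m (n - j) a b) c - m j a (m (n - j) b c)) = 0)
    (a b c e : A) :
    m 0 a (obstruction m i b c e) - obstruction m i (m 0 a b) c e
      + obstruction m i a (m 0 b c) e - obstruction m i a b (m 0 c e)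
      + m 0 (obstruction m i a b c) e = 0 := by
  set m' := Function.update m i 0
  have lower_orders_vanish : ∀ k ∈ range i,
      hochschildDiff (m' (k + 1)) (associatorCoeff m' (i - (k + 1))) a b c e = 0 := by
    intro k hk
    rcases (show k + 1 = i ∨ k + 1 < i by have := mem_range.1 hk; omega) with hk | hk
    · simp [m', hk, hochschildDiff, associatorCoeff, mixedAssociator]
    · have : associatorCoeff m' (i - (k + 1)) = 0 := by
        rw [associatorCoeff_update_of_lt m (by omega)]
        funext a b c
        rw [associatorCoeff_eq_sum_range]
        exact hassoc _ (by omega) (by omega) a b c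
      simp [this, hochschildDiff]
  have cocycle := sum_antidiagonal_hochschildDiff_associatorCoeff m' i a b c e
  rw [Nat.sum_antidiagonal_eq_sum_range_succ_mk, sum_range_succ', sum_eq_zero lower_orders_vanish,
    zero_add, Nat.sub_zero, associatorCoeff_update_self_zero,
    show m' 0 = m 0 from Function.update_of_ne (by omega) _ _] at cocycle
  exact cocycle

/-- If `m₀` is associative and the order-`n` associativity conditions hold for all
`1 ≤ n ≤ i−1`, then the order-`i` obstruction `ω_i` is a Hochschild 3-cocycle
with respect to `m₀`. -/
theorem obstruction_is_hochschild_three_cocycle {A : Type*} [AddCommGroup A] [Module ℂ A]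
    (i : ℕ) (hi : 2 ≤ i) (m : ℕ → A →ₗ[ℂ] A →ₗ[ℂ] A)
    (h0 : ∀ a b c : A, m 0 (m 0 a b) c = m 0 a (m 0 b c))
    (hassoc : ∀ n : ℕ, 1 ≤ n → n ≤ i - 1 → ∀ a b c : A,
      ∑ j ∈ Finset.range (n + 1),
        (m j (m (n - j) a b) c - m j a (m (n - j) b c)) = 0)
    (a b c e : A) :
    m 0 a (obstruction m i b c e) - obstruction m i (m 0 a b) c e
      + obstruction m i a (m 0 b c) e - obstruction m i a b (m 0 c e)
      + m 0 (obstruction m i a b c) e = 0 :=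
  obstruction_is_hochschild_three_cocycle_general i hi m hassoc a b c e
end

section
/- Let I be a type and let a, b : I →₀ ℕ be finitely supported functions; set g(a,b) := ∑_i |a(i) − b(i)| ∈ ℕ. If g(a,b) > n, or if g(a,b) + n is odd, then there is no pair (p, q) of finitely supported functions p, q : I →₀ ℕ satisfying (i) ∑_i (p(i) + q(i)) = n, (ii) a(i) + p(i) = b(i) + q(i) for every i ∈ I, and (iii) q(i) ≤ a(i) for every i ∈ I. -/
/-!
From `a i + p i = b i + q i` one gets `|a i - b i| = |p i - q i|`, and `|x - y|` is at most
`x + y` and has the same parity. Summing over a finite set carrying all four supports gives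
`g(a,b) ≤ n` and `g(a,b) ≡ n (mod 2)`.
-/

namespace Nat

theorem dist_le_add (m n : ℕ) : dist m n ≤ m + n := by
  unfold Nat.dist; omega

theorem even_dist_add_add (m n : ℕ) : Even (dist m n + (m + n)) := by
  rw [even_iff_two_dvd]; unfold Nat.dist; omega

end Nat

theorem Finsupp.sum_dist_eq_sum_of_support_subset {I : Type*} [DecidableEq I] (a b : I →₀ ℕ)
    {S : Finset I} (hS : a.support ∪ b.support ⊆ S) :
    ∑ i ∈ a.support ∪ b.support, Nat.dist (a i) (b i) = ∑ i ∈ S, Nat.dist (a i) (b i) := by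
  refine Finset.sum_subset hS fun i _ hi => ?_
  simp only [Finset.mem_union, Finsupp.mem_support_iff, not_or, not_not] at hi
  simp [hi.1, hi.2]

theorem Finset.sum_dist_le_of_add_eq_add {I : Type*} {a b p q : I → ℕ}
    (h : ∀ i, a i + p i = b i + q i) (S : Finset I) :
    ∑ i ∈ S, Nat.dist (a i) (b i) ≤ ∑ i ∈ S, (p i + q i) :=
  Finset.sum_le_sum fun i _ => by
    rw [Nat.dist_eq_intro (h i), add_comm]; exact Nat.dist_le_add _ _

theorem Finset.even_sum_dist_add_of_add_eq_add {I : Type*} {a b p q : I → ℕ}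
    (h : ∀ i, a i + p i = b i + q i) (S : Finset I) :
    Even (∑ i ∈ S, Nat.dist (a i) (b i) + ∑ i ∈ S, (p i + q i)) := by
  rw [← Finset.sum_add_distrib]
  refine Finset.even_sum _ fun i _ => ?_
  rw [Nat.dist_eq_intro (h i), add_comm (p i)]
  exact Nat.even_dist_add_add _ _

/-- If `g(a,b) := ∑_i |a(i) − b(i)| > n`, or `g(a,b) + n` is odd, then there is no pair
`(p, q)` of finitely supported multiplicity functions with total card `n`,
`a + p = b + q` pointwise, and `q ≤ a` pointwise: `𝓘ᵇₐ(n) = ∅`. -/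
theorem no_ladder_pair_of_dist_gt_or_odd {I : Type*} [DecidableEq I]
    (a b : I →₀ ℕ) (n : ℕ)
    (h : n < ∑ i ∈ a.support ∪ b.support, Nat.dist (a i) (b i)
        ∨ Odd ((∑ i ∈ a.support ∪ b.support, Nat.dist (a i) (b i)) + n)) :
    ¬ ∃ p q : I →₀ ℕ,
        ((p.sum fun _ k => k) + (q.sum fun _ k => k) = n) ∧
        (∀ i : I, a i + p i = b i + q i) ∧
        (∀ i : I, q i ≤ a i) := by
  rintro ⟨p, q, hsum, heq, -⟩
  set S := (a.support ∪ b.support) ∪ (p.support ∪ q.support)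
  have hab : a.support ∪ b.support ⊆ S := Finset.subset_union_left
  have hp : p.support ⊆ S := Finset.subset_union_left.trans Finset.subset_union_right
  have hq : q.support ⊆ S := Finset.subset_union_right.trans Finset.subset_union_right
  have hn : n = ∑ i ∈ S, (p i + q i) := by
    rw [Finset.sum_add_distrib, ← hsum, Finsupp.sum_of_support_subset p hp _ fun _ _ => rfl,
      Finsupp.sum_of_support_subset q hq _ fun _ _ => rfl]
  rw [Finsupp.sum_dist_eq_sum_of_support_subset a b hab, hn] at h
  rcases h with h | h
  · exact (Finset.sum_dist_le_of_add_eq_add heq S).not_gt h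
  · exact Nat.not_even_iff_odd.2 h (Finset.even_sum_dist_add_of_add_eq_add heq S)
end

section
/- For every real μ > 0 and every x ∈ EuclideanSpace ℝ (Fin 3) with x ≠ 0, Δ( y ↦ log(μ‖y‖)/‖y‖ )(x) = −‖x‖^{−3}; that is, 1/r³ = −Δ( log(μr)/r ) holds pointwise for r = ‖x‖ ≠ 0. -/
/-!
For a radial function `g ‖y‖` on `ℝᴰ` the Laplacian at `x ≠ 0` is `g'' r + (D - 1) / r * g' r`
with `r = ‖x‖`: the first derivative is `g' r / r • ⟪x, ·⟫`, and differentiating once more gives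
the Hessian `(g'' - g'/r) / r² ⟪x, v⟫² + g'/r ‖v‖²`, whose trace is that expression.
For `g r = log (μ r) / r` one has `g' r = (1 - log (μ r)) / r²` and `g'' r = (2 log (μ r) - 3) / r³`,
so for `D = 3` the logarithms cancel and `Δ g = -1 / r³`.
-/

/-- The Laplacian of `f : EuclideanSpace ℝ (Fin D) → ℝ` at `x`: the sum over the
standard coordinate directions of the second directional derivatives of `f` at `x`. -/
noncomputable def laplacian {D : ℕ} (f : EuclideanSpace ℝ (Fin D) → ℝ)
    (x : EuclideanSpace ℝ (Fin D)) : ℝ :=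
  ∑ i : Fin D,
    fderiv ℝ (fun y => fderiv ℝ f y (EuclideanSpace.single i (1 : ℝ))) x
      (EuclideanSpace.single i (1 : ℝ))

open InnerProductSpace RealInnerProductSpace Filter Topology

section Radial

variable {E : Type*} [NormedAddCommGroup E] [InnerProductSpace ℝ E]

theorem hasFDerivAt_norm {x : E} (hx : x ≠ 0) :
    HasFDerivAt (fun y : E => ‖y‖) (‖x‖⁻¹ • innerSL ℝ x) x := by
  have hpos : 0 < ‖x‖ := norm_pos_iff.mpr hx
  have h := (Real.hasDerivAt_sqrt (pow_pos hpos 2).ne').comp_hasFDerivAt x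
    (hasStrictFDerivAt_norm_sq x).hasFDerivAt
  simp only [Function.comp_def, Real.sqrt_sq (norm_nonneg _)] at h
  refine h.congr_fderiv ?_
  ext v
  simp only [smul_apply, coe_innerSL_apply, nsmul_eq_mul, Nat.cast_ofNat, smul_eq_mul]
  field_simp

theorem HasDerivAt.hasFDerivAt_comp_norm {g : ℝ → ℝ} {d : ℝ} {x : E} (hx : x ≠ 0)
    (hg : HasDerivAt g d ‖x‖) :
    HasFDerivAt (fun y : E => g ‖y‖) ((d / ‖x‖) • innerSL ℝ x) x := by
  refine (hg.comp_hasFDerivAt x (hasFDerivAt_norm hx)).congr_fderiv ?_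
  rw [smul_smul, div_eq_mul_inv]

theorem fderiv_comp_norm_apply {g g' : ℝ → ℝ} {x : E} (hx : x ≠ 0)
    (hg : HasDerivAt g (g' ‖x‖) ‖x‖) (v : E) :
    fderiv ℝ (fun y : E => g ‖y‖) x v = g' ‖x‖ / ‖x‖ * ⟪x, v⟫ := by
  rw [(hg.hasFDerivAt_comp_norm hx).fderiv]
  rfl

theorem fderiv_fderiv_comp_norm_apply {g g' : ℝ → ℝ} {g'' : ℝ} {x : E} (hx : x ≠ 0)
    (hg : ∀ᶠ s in 𝓝 ‖x‖, HasDerivAt g (g' s) s) (hg' : HasDerivAt g' g'' ‖x‖) (v : E) :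
    fderiv ℝ (fun y => fderiv ℝ (fun y : E => g ‖y‖) y v) x v =
      (g'' - g' ‖x‖ / ‖x‖) / ‖x‖ ^ 2 * ⟪x, v⟫ ^ 2 + g' ‖x‖ / ‖x‖ * ‖v‖ ^ 2 := by
  have hpos : 0 < ‖x‖ := norm_pos_iff.mpr hx
  have hfirst : (fun y => fderiv ℝ (fun y : E => g ‖y‖) y v) =ᶠ[𝓝 x]
      fun y => g' ‖y‖ / ‖y‖ * ⟪v, y⟫ := by
    have hy0 : ∀ᶠ y in 𝓝 x, y ≠ 0 := isOpen_compl_singleton.mem_nhds hx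
    have hgy : ∀ᶠ y in 𝓝 x, HasDerivAt g (g' ‖y‖) ‖y‖ :=
      continuous_norm.continuousAt.eventually hg
    filter_upwards [hy0, hgy] with y hy hgy
    rw [fderiv_comp_norm_apply hy hgy v, real_inner_comm]
  have hquot : HasDerivAt (fun s => g' s / s) ((g'' * ‖x‖ - g' ‖x‖) / ‖x‖ ^ 2) ‖x‖ :=
    (hg'.div (hasDerivAt_id' _) hpos.ne').congr_deriv (by ring)
  have hprod : HasFDerivAt (fun y => g' ‖y‖ / ‖y‖ * ⟪v, y⟫) _ x :=
    (hquot.hasFDerivAt_comp_norm hx).mul (innerSL ℝ v).hasFDerivAt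
  rw [hfirst.fderiv_eq, hprod.fderiv]
  simp only [real_inner_comm x v, add_apply, smul_apply, coe_innerSL_apply,
    real_inner_self_eq_norm_sq, smul_eq_mul]
  field_simp
  ring

end Radial

theorem laplacian_comp_norm {D : ℕ} {g g' : ℝ → ℝ} {g'' : ℝ} {x : EuclideanSpace ℝ (Fin D)}
    (hx : x ≠ 0) (hg : ∀ᶠ s in 𝓝 ‖x‖, HasDerivAt g (g' s) s) (hg' : HasDerivAt g' g'' ‖x‖) :
    laplacian (fun y => g ‖y‖) x = g'' + (D - 1) / ‖x‖ * g' ‖x‖ := by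
  have hpos : 0 < ‖x‖ := norm_pos_iff.mpr hx
  simp only [laplacian, fderiv_fderiv_comp_norm_apply hx hg hg', EuclideanSpace.inner_single_right,
    PiLp.norm_single, Real.ringHom_apply, Finset.sum_add_distrib, ← Finset.mul_sum,
    ← EuclideanSpace.real_norm_sq_eq, norm_one, one_pow, one_mul, mul_one, Finset.sum_const,
    Finset.card_univ, Fintype.card_fin, nsmul_eq_mul]
  field_simp
  ring

theorem Real.hasDerivAt_log_const_mul {μ s : ℝ} (hμ : μ ≠ 0) (hs : s ≠ 0) :
    HasDerivAt (fun r => Real.log (μ * r)) s⁻¹ s :=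
  (((hasDerivAt_id' s).const_mul μ).log (mul_ne_zero hμ hs)).congr_deriv (by field_simp)

/-- Differential renormalization identity in `D = 3`: for `μ > 0` and `x ≠ 0`,
`Δ( log(μ‖y‖)/‖y‖ )(x) = −‖x‖⁻³`, i.e. `1/r³ = −Δ(log(μ r)/r)` for `r = ‖x‖ ≠ 0`. -/
theorem differential_renormalization (μ : ℝ) (hμ : 0 < μ)
    (x : EuclideanSpace ℝ (Fin 3)) (hx : x ≠ 0) :
    laplacian (fun y => Real.log (μ * ‖y‖) / ‖y‖) x = -(‖x‖ ^ 3)⁻¹ := by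
  have hr : 0 < ‖x‖ := norm_pos_iff.mpr hx
  have hg : ∀ s ≠ 0, HasDerivAt (fun r => Real.log (μ * r) / r)
      ((1 - Real.log (μ * s)) / s ^ 2) s := fun s hs =>
    ((Real.hasDerivAt_log_const_mul hμ.ne' hs).div (hasDerivAt_id' s) hs).congr_deriv
      (by field_simp)
  have hg' : HasDerivAt (fun s => (1 - Real.log (μ * s)) / s ^ 2)
      ((2 * Real.log (μ * ‖x‖) - 3) / ‖x‖ ^ 3) ‖x‖ :=
    (((Real.hasDerivAt_log_const_mul hμ.ne' hr.ne').const_sub 1).div (hasDerivAt_pow 2 ‖x‖)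
      (by positivity)).congr_deriv (by field_simp; ring)
  rw [laplacian_comp_norm hx (eventually_ne_nhds hr.ne' |>.mono hg) hg']
  push_cast
  field_simp
  ring
end

section
/- Let D, J ∈ ℕ, let P ∈ MvPolynomial (Fin D) ℝ be homogeneous of degree J and harmonic, and let H : EuclideanSpace ℝ (Fin D) → ℝ be its polynomial function. Then for every a ∈ ℝ and every x ≠ 0, Δ( y ↦ ‖y‖ᵃ · H(y) )(x) = a·(a + 2J + D − 2)·‖x‖^{a−2}·H(x). -/
/-!
By Leibniz's rule, `Δ(f·H) = (Δf)·H + 2 ∇f·∇H + f·ΔH`. For `f = ‖y‖ᵃ` away from the origin,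
`∇f = a‖y‖^{a-2} y` and `Δf = a(a + D - 2)‖y‖^{a-2}`; Euler's identity `y·∇H = J·H` turns the cross
term into `2aJ‖y‖^{a-2} H`, and `ΔH = 0`.
-/

open MvPolynomial
open scoped RealInnerProductSpace

section ProductRule

variable {𝕜 : Type*} [NontriviallyNormedField 𝕜] {E : Type*} [NormedAddCommGroup E]
  [NormedSpace 𝕜 E] {f g : E → 𝕜} {x : E}

theorem fderiv_fderiv_mul_apply (hf : ContDiffAt 𝕜 2 f x) (hg : ContDiffAt 𝕜 2 g x) (v : E) :
    fderiv 𝕜 (fun y => fderiv 𝕜 (fun z => f z * g z) y v) x v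
      = fderiv 𝕜 (fun y => fderiv 𝕜 f y v) x v * g x
        + 2 * (fderiv 𝕜 f x v * fderiv 𝕜 g x v) + f x * fderiv 𝕜 (fun y => fderiv 𝕜 g y v) x v := by
  have hdiff : ∀ {h : E → 𝕜}, ContDiffAt 𝕜 2 h x →
      (∀ᶠ y in nhds x, DifferentiableAt 𝕜 h y) ∧ DifferentiableAt 𝕜 (fun y => fderiv 𝕜 h y v) x :=
    fun hh => ⟨(hh.eventually (by simp)).mono fun y hy => hy.differentiableAt (by simp),
      ((hh.fderiv_right (m := 1) (by norm_num)).differentiableAt one_ne_zero).clm_apply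
        (differentiableAt_const v)⟩
  obtain ⟨hf₁, hf₂⟩ := hdiff hf
  obtain ⟨hg₁, hg₂⟩ := hdiff hg
  have hleibniz : (fun y => fderiv 𝕜 (fun z => f z * g z) y v)
      =ᶠ[nhds x] fun y => fderiv 𝕜 f y v * g y + f y * fderiv 𝕜 g y v := by
    filter_upwards [hf₁, hg₁] with y hfy hgy
    rw [fderiv_fun_mul hfy hgy]
    simp only [add_apply, smul_apply, smul_eq_mul]
    ring
  have hderiv : HasFDerivAt (fun y => fderiv 𝕜 f y v * g y + f y * fderiv 𝕜 g y v) _ x :=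
    (hf₂.hasFDerivAt.mul hg₁.self_of_nhds.hasFDerivAt).add
      (hf₁.self_of_nhds.hasFDerivAt.mul hg₂.hasFDerivAt)
  rw [hleibniz.fderiv_eq, hderiv.fderiv]
  simp only [add_apply, smul_apply, smul_eq_mul]
  ring

end ProductRule

section NormRpow

variable {E : Type*} [NormedAddCommGroup E] [InnerProductSpace ℝ E] {x : E}

theorem hasFDerivAt_norm_rpow_of_ne_zero (hx : x ≠ 0) (a : ℝ) :
    HasFDerivAt (fun y : E => ‖y‖ ^ a) ((a * ‖x‖ ^ (a - 2)) • innerSL ℝ x) x := by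
  have hsq_rpow (y : E) (b : ℝ) : (‖y‖ ^ 2) ^ b = ‖y‖ ^ (2 * b) := by
    rw [← Real.rpow_natCast_mul (norm_nonneg y), Nat.cast_ofNat]
  have h := (hasStrictFDerivAt_norm_sq x).hasFDerivAt.rpow_const (p := a / 2)
    (Or.inl (pow_ne_zero 2 (norm_ne_zero_iff.2 hx)))
  simp only [hsq_rpow] at h
  convert h using 1
  · ext y; ring_nf
  · ext v; simp only [smul_apply, smul_eq_mul, nsmul_eq_mul]; ring_nf

theorem fderiv_norm_rpow_apply (hx : x ≠ 0) (a : ℝ) (v : E) :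
    fderiv ℝ (fun y : E => ‖y‖ ^ a) x v = a * ‖x‖ ^ (a - 2) * ⟪x, v⟫ := by
  simp [(hasFDerivAt_norm_rpow_of_ne_zero hx a).fderiv]

theorem fderiv_fderiv_norm_rpow_apply (hx : x ≠ 0) (a : ℝ) (v : E) :
    fderiv ℝ (fun y => fderiv ℝ (fun z : E => ‖z‖ ^ a) y v) x v
      = a * (a - 2) * ‖x‖ ^ (a - 4) * ⟪x, v⟫ ^ 2 + a * ‖x‖ ^ (a - 2) * ‖v‖ ^ 2 := by
  have hfirst : (fun y => fderiv ℝ (fun z : E => ‖z‖ ^ a) y v)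
      =ᶠ[nhds x] fun y => a * ‖y‖ ^ (a - 2) * ⟪y, v⟫ :=
    (eventually_ne_nhds hx).mono fun y hy => fderiv_norm_rpow_apply hy a v
  have hderiv : HasFDerivAt (fun y => a * ‖y‖ ^ (a - 2) * ⟪y, v⟫) _ x :=
    ((hasFDerivAt_norm_rpow_of_ne_zero hx (a - 2)).const_mul a).mul
      ((hasFDerivAt_id x).inner ℝ (hasFDerivAt_const v x))
  rw [hfirst.fderiv_eq, hderiv.fderiv]
  simp only [id_eq, add_apply, smul_apply, ContinuousLinearMap.comp_apply,
    ContinuousLinearMap.prod_apply, ContinuousLinearMap.id_apply, zero_apply, fderivInnerCLM_apply,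
    inner_zero_right, real_inner_self_eq_norm_sq, zero_add, smul_eq_mul, coe_innerSL_apply]
  rw [show a - 2 - 2 = a - 4 by ring]
  ring

end NormRpow

section Polynomial

variable {ι : Type*} [Fintype ι]

theorem contDiff_eval (p : MvPolynomial ι ℝ) {n : WithTop ℕ∞} :
    ContDiff ℝ n fun y : EuclideanSpace ℝ ι => eval (fun j => y j) p :=
  (AnalyticOnNhd.eval_continuousLinearMap' (𝕜 := ℝ) (E := EuclideanSpace ℝ ι) (B := ℝ)
    (fun j => EuclideanSpace.proj j) p).contDiff

theorem fderiv_eval_apply_single [DecidableEq ι] (p : MvPolynomial ι ℝ) (y : EuclideanSpace ℝ ι)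
    (i : ι) :
    fderiv ℝ (fun z : EuclideanSpace ℝ ι => eval (fun j => z j) p) y (EuclideanSpace.single i 1)
      = eval (fun j => y j) (pderiv i p) := by
  have hdiff (q : MvPolynomial ι ℝ) :
      DifferentiableAt ℝ (fun z : EuclideanSpace ℝ ι => eval (fun j => z j) q) y :=
    (contDiff_eval q (n := 1)).differentiable one_ne_zero y
  induction p using MvPolynomial.induction_on with
  | C c => simp
  | add p q hp hq =>
    simp only [map_add]
    rw [fderiv_fun_add (hdiff p) (hdiff q), add_apply, hp, hq]
  | mul_X p n hp =>
    simp only [eval_mul, eval_X, pderiv_mul, pderiv_X]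
    have h : HasFDerivAt (fun z : EuclideanSpace ℝ ι => eval (fun j => z j) p * z n) _ y :=
      (hdiff p).hasFDerivAt.mul (EuclideanSpace.proj (𝕜 := ℝ) n).hasFDerivAt
    rw [h.fderiv]
    by_cases hn : n = i <;> simp [hp, hn] <;> ring

theorem sum_mul_fderiv_eval_of_isHomogeneous [DecidableEq ι] {p : MvPolynomial ι ℝ} {J : ℕ}
    (hp : p.IsHomogeneous J) (y : EuclideanSpace ℝ ι) :
    ∑ i, y i * fderiv ℝ (fun z : EuclideanSpace ℝ ι => eval (fun j => z j) p) y
      (EuclideanSpace.single i 1) = J * eval (fun j => y j) p := by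
  simpa [fderiv_eval_apply_single] using congrArg (eval fun j => y j) hp.sum_X_mul_pderiv

end Polynomial

section Laplacian

variable {D : ℕ} {x : EuclideanSpace ℝ (Fin D)}

theorem laplacian_mul {f g : EuclideanSpace ℝ (Fin D) → ℝ} (hf : ContDiffAt ℝ 2 f x)
    (hg : ContDiffAt ℝ 2 g x) :
    laplacian (fun y => f y * g y) x
      = laplacian f x * g x
        + 2 * ∑ i, fderiv ℝ f x (EuclideanSpace.single i 1)
          * fderiv ℝ g x (EuclideanSpace.single i 1)
        + f x * laplacian g x := by
  simp only [laplacian, fderiv_fderiv_mul_apply hf hg, Finset.sum_add_distrib, Finset.sum_mul,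
    Finset.mul_sum]

theorem laplacian_eval (p : MvPolynomial (Fin D) ℝ) :
    laplacian (fun y => eval (fun j => y j) p) x
      = eval (fun j => x j) (∑ i, pderiv i (pderiv i p)) := by
  simp [laplacian, fderiv_eval_apply_single]

theorem laplacian_norm_rpow (hx : x ≠ 0) (a : ℝ) :
    laplacian (fun y => ‖y‖ ^ a) x = a * (a + D - 2) * ‖x‖ ^ (a - 2) := by
  have hpow : ‖x‖ ^ (a - 4) * ‖x‖ ^ 2 = ‖x‖ ^ (a - 2) := by
    rw [← Real.rpow_natCast, ← Real.rpow_add (norm_pos_iff.2 hx)]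
    ring_nf
  simp only [laplacian, fderiv_fderiv_norm_rpow_apply hx, EuclideanSpace.inner_single_right,
    Real.ringHom_apply, one_mul, PiLp.norm_single, norm_one, one_pow, mul_one,
    Finset.sum_add_distrib, ← Finset.mul_sum, ← EuclideanSpace.real_norm_sq_eq, Finset.sum_const,
    Finset.card_univ, Fintype.card_fin, nsmul_eq_mul]
  rw [mul_assoc (a * (a - 2)), hpow]
  ring

end Laplacian

/-- For `P` a harmonic homogeneous polynomial of degree `J` in `D` variables with
polynomial function `H`, and any `a : ℝ`,
`Δ( ‖y‖ᵃ·H(y) )(x) = a·(a + 2J + D − 2)·‖x‖^{a−2}·H(x)` for all `x ≠ 0`. -/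
theorem laplacian_rpow_mul_harmonic (D J : ℕ) (P : MvPolynomial (Fin D) ℝ)
    (hhom : P.IsHomogeneous J)
    (hharm : ∑ i : Fin D, MvPolynomial.pderiv i (MvPolynomial.pderiv i P) = 0)
    (a : ℝ) (x : EuclideanSpace ℝ (Fin D)) (hx : x ≠ 0) :
    laplacian (fun y => ‖y‖ ^ a * MvPolynomial.eval (fun i => y i) P) x
      = a * (a + 2 * (J : ℝ) + (D : ℝ) - 2) * ‖x‖ ^ (a - 2)
          * MvPolynomial.eval (fun i => x i) P := by
  have hradial : ContDiffAt ℝ 2 (fun y : EuclideanSpace ℝ (Fin D) => ‖y‖ ^ a) x :=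
    (contDiffAt_norm ℝ hx).rpow_const_of_ne (norm_ne_zero_iff.2 hx)
  have hcross : ∑ i, fderiv ℝ (fun y => ‖y‖ ^ a) x (EuclideanSpace.single i 1)
      * fderiv ℝ (fun y => eval (fun j => y j) P) x (EuclideanSpace.single i 1)
      = a * ‖x‖ ^ (a - 2) * (J * eval (fun j => x j) P) := by
    simp only [fderiv_norm_rpow_apply hx, EuclideanSpace.inner_single_right, Real.ringHom_apply,
      one_mul, mul_assoc, ← Finset.mul_sum, sum_mul_fderiv_eval_of_isHomogeneous hhom]
  rw [laplacian_mul hradial (contDiff_eval P).contDiffAt, laplacian_norm_rpow hx, hcross,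
    laplacian_eval, hharm, map_zero]
  ring
end

section
/- Let D, J, p ∈ ℕ, let P ∈ MvPolynomial (Fin D) ℝ be homogeneous of degree J and harmonic, and let H : EuclideanSpace ℝ (Fin D) → ℝ be its polynomial function. Then for every a ∈ ℝ and every x ≠ 0, Δ( y ↦ ‖y‖ᵃ·(log‖y‖)ᵖ·H(y) )(x) = [ a(a + 2J + D − 2)·(log‖x‖)ᵖ + p(2a + 2J + D − 2)·(log‖x‖)^{p−1} + p(p−1)·(log‖x‖)^{p−2} ]·‖x‖^{a−2}·H(x), where for p = 0 the last two summands vanish and for p = 1 the last summand vanishes. -/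
open Real MvPolynomial Filter Topology

variable {D : ℕ}

theorem MvPolynomial.hasFDerivAt_eval_euclidean (Q : MvPolynomial (Fin D) ℝ)
    (x : EuclideanSpace ℝ (Fin D)) :
    HasFDerivAt (fun y : EuclideanSpace ℝ (Fin D) => eval (fun i => y i) Q)
      (∑ i, eval (fun i => x i) (pderiv i Q) • EuclideanSpace.proj (𝕜 := ℝ) i) x := by
  induction Q using MvPolynomial.induction_on with
  | C c => simpa using hasFDerivAt_const c x
  | add P Q hP hQ => simpa [add_smul, Finset.sum_add_distrib] using hP.fun_add hQ
  | mul_X P j hP =>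
    simp only [map_mul, eval_X]
    refine (hP.fun_mul (EuclideanSpace.proj (𝕜 := ℝ) j).hasFDerivAt).congr_fderiv ?_
    ext v
    simp [pderiv_X, Pi.single_apply, apply_ite, ite_mul, add_mul, Finset.sum_add_distrib,
      Finset.mul_sum, mul_assoc]

theorem EuclideanSpace.sum_smul_proj_apply_single (w : Fin D → ℝ) (i : Fin D) :
    (∑ j, w j • EuclideanSpace.proj (𝕜 := ℝ) j) (EuclideanSpace.single i 1) = w i := by
  simp

theorem fderiv_comp_norm_sq_mul_eval_apply_single (Q : MvPolynomial (Fin D) ℝ)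
    {g g' : ℝ → ℝ} {y : EuclideanSpace ℝ (Fin D)}
    (hg : HasDerivAt g (g' (‖y‖ ^ 2)) (‖y‖ ^ 2)) (i : Fin D) :
    fderiv ℝ (fun y => g (‖y‖ ^ 2) * eval (fun i => y i) Q) y (EuclideanSpace.single i 1) =
      g' (‖y‖ ^ 2) * (2 * y i) * eval (fun i => y i) Q
        + g (‖y‖ ^ 2) * eval (fun i => y i) (pderiv i Q) := by
  have hf : HasFDerivAt (fun y => g (‖y‖ ^ 2) * eval (fun i => y i) Q) _ y :=
    (hg.comp_hasFDerivAt y (hasStrictFDerivAt_norm_sq y).hasFDerivAt).mul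
      (hasFDerivAt_eval_euclidean Q y)
  rw [hf.fderiv]
  simp only [Function.comp_apply, add_apply, smul_apply,
    EuclideanSpace.sum_smul_proj_apply_single, coe_innerSL_apply,
    EuclideanSpace.inner_single_right, conj_trivial, smul_eq_mul, one_mul, nsmul_eq_mul]
  ring

theorem laplacian_comp_norm_sq_mul_eval (Q : MvPolynomial (Fin D) ℝ) {g g' : ℝ → ℝ} {g'' : ℝ}
    {x : EuclideanSpace ℝ (Fin D)}
    (hg : ∀ᶠ t in 𝓝 (‖x‖ ^ 2), HasDerivAt g (g' t) t) (hg' : HasDerivAt g' g'' (‖x‖ ^ 2)) :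
    laplacian (fun y => g (‖y‖ ^ 2) * eval (fun i => y i) Q) x =
      (4 * ‖x‖ ^ 2 * g'' + 2 * D * g' (‖x‖ ^ 2)) * eval (fun i => x i) Q
        + 4 * g' (‖x‖ ^ 2) * ∑ i, x i * eval (fun i => x i) (pderiv i Q)
        + g (‖x‖ ^ 2) * ∑ i, eval (fun i => x i) (pderiv i (pderiv i Q)) := by
  have hN : HasFDerivAt (fun y : EuclideanSpace ℝ (Fin D) => ‖y‖ ^ 2) (2 • innerSL ℝ x) x :=
    (hasStrictFDerivAt_norm_sq x).hasFDerivAt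
  have hterm (i : Fin D) :
      fderiv ℝ (fun y => fderiv ℝ (fun y => g (‖y‖ ^ 2) * eval (fun i => y i) Q) y
          (EuclideanSpace.single i 1)) x (EuclideanSpace.single i 1) =
        4 * g'' * eval (fun i => x i) Q * (x i * x i) + 2 * g' (‖x‖ ^ 2) * eval (fun i => x i) Q
          + 4 * g' (‖x‖ ^ 2) * (x i * eval (fun i => x i) (pderiv i Q))
          + g (‖x‖ ^ 2) * eval (fun i => x i) (pderiv i (pderiv i Q)) := by
    have hfirst : (fun y => fderiv ℝ (fun y => g (‖y‖ ^ 2) * eval (fun i => y i) Q) y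
        (EuclideanSpace.single i 1)) =ᶠ[𝓝 x] fun y => g' (‖y‖ ^ 2) * (2 * y i)
          * eval (fun i => y i) Q + g (‖y‖ ^ 2) * eval (fun i => y i) (pderiv i Q) :=
      hN.continuousAt.eventually hg |>.mono fun y hy =>
        fderiv_comp_norm_sq_mul_eval_apply_single Q hy i
    have hsecond : HasFDerivAt (fun y => g' (‖y‖ ^ 2) * (2 * y i)
        * eval (fun i => y i) Q + g (‖y‖ ^ 2) * eval (fun i => y i) (pderiv i Q)) _ x :=
      (((hg'.comp_hasFDerivAt x hN).mul
        ((EuclideanSpace.proj (𝕜 := ℝ) i).hasFDerivAt.const_mul 2)).mul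
          (hasFDerivAt_eval_euclidean Q x)).add
        ((hg.self_of_nhds.comp_hasFDerivAt x hN).mul
          (hasFDerivAt_eval_euclidean (pderiv i Q) x))
    rw [hfirst.fderiv_eq, hsecond.fderiv]
    simp only [Function.comp_apply, Pi.mul_apply, add_apply, smul_apply,
      EuclideanSpace.sum_smul_proj_apply_single, coe_innerSL_apply,
      EuclideanSpace.inner_single_right, conj_trivial, smul_eq_mul, one_mul, nsmul_eq_mul,
      PiLp.proj_apply, PiLp.single_eq_same]
    ring
  have hnorm : ‖x‖ ^ 2 = ∑ i, x i * x i := by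
    rw [EuclideanSpace.norm_sq_eq]
    simp only [Real.norm_eq_abs, sq, abs_mul_abs_self]
  simp only [laplacian, hterm, Finset.sum_add_distrib, ← Finset.mul_sum, Finset.sum_const,
    Finset.card_univ, Fintype.card_fin, nsmul_eq_mul, hnorm]
  ring

theorem laplacian_comp_norm_sq_mul_eval_of_isHomogeneous_of_harmonic {J : ℕ}
    {P : MvPolynomial (Fin D) ℝ} (hhom : P.IsHomogeneous J)
    (hharm : ∑ i, pderiv i (pderiv i P) = 0) {g g' : ℝ → ℝ} {g'' : ℝ}
    {x : EuclideanSpace ℝ (Fin D)}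
    (hg : ∀ᶠ t in 𝓝 (‖x‖ ^ 2), HasDerivAt g (g' t) t) (hg' : HasDerivAt g' g'' (‖x‖ ^ 2)) :
    laplacian (fun y => g (‖y‖ ^ 2) * eval (fun i => y i) P) x =
      (4 * ‖x‖ ^ 2 * g'' + 2 * (D + 2 * J) * g' (‖x‖ ^ 2)) * eval (fun i => x i) P := by
  have heuler : ∑ i, x i * eval (fun i => x i) (pderiv i P) = J * eval (fun i => x i) P := by
    simpa using congrArg (eval fun i => x i) hhom.sum_X_mul_pderiv
  have hΔ : ∑ i, eval (fun i => x i) (pderiv i (pderiv i P)) = 0 := by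
    simpa using congrArg (eval fun i => x i) hharm
  rw [laplacian_comp_norm_sq_mul_eval P hg hg', heuler, hΔ]
  ring

noncomputable def rpowMulHalfLogPow (c : ℝ) (q : ℕ) (t : ℝ) : ℝ := t ^ c * (log t / 2) ^ q

theorem rpowMulHalfLogPow_sq (c : ℝ) (q : ℕ) {r : ℝ} (hr : 0 ≤ r) :
    rpowMulHalfLogPow c q (r ^ 2) = r ^ (2 * c) * log r ^ q := by
  rw [rpowMulHalfLogPow, Real.log_pow, ← Real.rpow_natCast, ← Real.rpow_mul hr]
  norm_num

theorem hasDerivAt_rpowMulHalfLogPow (c : ℝ) (q : ℕ) {t : ℝ} (ht : 0 < t) :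
    HasDerivAt (rpowMulHalfLogPow c q)
      (c * rpowMulHalfLogPow (c - 1) q t + q / 2 * rpowMulHalfLogPow (c - 1) (q - 1) t) t := by
  have h : HasDerivAt (rpowMulHalfLogPow c q) _ t :=
    (hasDerivAt_rpow_const (p := c) (Or.inl ht.ne')).mul
      (((hasDerivAt_log ht.ne').div_const 2).pow q)
  refine h.congr_deriv ?_
  simp only [rpowMulHalfLogPow, rpow_sub_one ht.ne']
  field_simp

/-- For `P` a harmonic homogeneous polynomial of degree `J` in `D` variables with
polynomial function `H`, any `a : ℝ` and `p : ℕ`,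
`Δ( ‖y‖ᵃ·(log‖y‖)ᵖ·H(y) )(x) = [ a(a+2J+D−2)(log‖x‖)ᵖ + p(2a+2J+D−2)(log‖x‖)^{p−1}
  + p(p−1)(log‖x‖)^{p−2} ]·‖x‖^{a−2}·H(x)` for `x ≠ 0`; for `p = 0` the last two
summands vanish (their coefficients `p` and `p(p−1)` are zero) and for `p = 1` the
last summand vanishes. -/
theorem laplacian_rpow_log_pow_mul_harmonic (D J p : ℕ) (P : MvPolynomial (Fin D) ℝ)
    (hhom : P.IsHomogeneous J)
    (hharm : ∑ i : Fin D, MvPolynomial.pderiv i (MvPolynomial.pderiv i P) = 0)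
    (a : ℝ) (x : EuclideanSpace ℝ (Fin D)) (hx : x ≠ 0) :
    laplacian (fun y => ‖y‖ ^ a * Real.log ‖y‖ ^ p
        * MvPolynomial.eval (fun i => y i) P) x
      = (a * (a + 2 * (J : ℝ) + (D : ℝ) - 2) * Real.log ‖x‖ ^ p
          + (p : ℝ) * (2 * a + 2 * (J : ℝ) + (D : ℝ) - 2) * Real.log ‖x‖ ^ (p - 1)
          + (p : ℝ) * ((p : ℝ) - 1) * Real.log ‖x‖ ^ (p - 2))
        * ‖x‖ ^ (a - 2) * MvPolynomial.eval (fun i => x i) P := by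
  have hr : 0 < ‖x‖ := norm_pos_iff.mpr hx
  have hs : 0 < ‖x‖ ^ 2 := by positivity
  obtain ⟨c, rfl⟩ : ∃ c, a = 2 * c := ⟨a / 2, by ring⟩
  have hprofile : (fun y : EuclideanSpace ℝ (Fin D) => ‖y‖ ^ (2 * c) * log ‖y‖ ^ p
      * eval (fun i => y i) P) = fun y => rpowMulHalfLogPow c p (‖y‖ ^ 2) * eval (fun i => y i) P :=
    funext fun y => by rw [rpowMulHalfLogPow_sq _ _ (norm_nonneg y)]
  rw [hprofile, laplacian_comp_norm_sq_mul_eval_of_isHomogeneous_of_harmonic hhom hharm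
    (eventually_of_mem (Ioi_mem_nhds hs) fun t ht => hasDerivAt_rpowMulHalfLogPow c p ht)
    (((hasDerivAt_rpowMulHalfLogPow (c - 1) p hs).const_mul c).add
      ((hasDerivAt_rpowMulHalfLogPow (c - 1) (p - 1) hs).const_mul _))]
  simp only [rpowMulHalfLogPow_sq _ _ hr.le, show 2 * (c - 1) = 2 * c - 2 by ring,
    show 2 * (c - 1 - 1) = 2 * c - 2 - 2 by ring, rpow_sub hr (2 * c - 2), rpow_two, Nat.sub_sub]
  field_simp
  rcases p with _ | p
  · simp only [Nat.cast_zero, zero_tsub, pow_zero]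
    ring
  · simp only [Nat.cast_succ, add_tsub_cancel_right, Nat.reduceSubDiff]
    ring
end

section
/- Let D ≥ 3 and l ∈ ℕ. The real vector space of polynomials in D variables that are homogeneous of degree l and harmonic has dimension N(l,D) = (2l + D − 2)·(l + D − 3)! / ((D − 2)!·l!); equivalently, (D−2)!·l!·dim = (2l + D − 2)·(l + D − 3)!. -/
/-- The polynomial Laplace operator `∑_i ∂²/∂Xᵢ²` on `MvPolynomial (Fin D) ℝ`. -/
noncomputable def polyLaplacian (D : ℕ) :
    MvPolynomial (Fin D) ℝ →ₗ[ℝ] MvPolynomial (Fin D) ℝ :=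
  ∑ i : Fin D,
    ((MvPolynomial.pderiv i).toLinearMap.comp (MvPolynomial.pderiv i).toLinearMap)

/-- The space of harmonic polynomials that are homogeneous of degree `l`. -/
noncomputable def harmonicHomogeneous (D l : ℕ) : Submodule ℝ (MvPolynomial (Fin D) ℝ) :=
  MvPolynomial.homogeneousSubmodule (Fin D) ℝ l ⊓ LinearMap.ker (polyLaplacian D)

/-!
The Fischer inner product `⟨P, Q⟩ = ∑ₐ a! Pₐ Qₐ` on real polynomials is positive definite and makes
each `∂ᵢ` adjoint to multiplication by `Xᵢ`, hence the Laplacian adjoint to multiplication by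
`r² = ∑ᵢ Xᵢ²`. So `Q ↦ Δ(r² Q)` is injective, hence bijective, on the finite-dimensional space
`Hₗ` of homogeneous polynomials of degree `l`, and `Δ : Hₗ₊₂ → Hₗ` is onto. Rank–nullity gives
`dim Harmₗ₊₂ = dim Hₗ₊₂ - dim Hₗ = multichoose D (l + 2) - multichoose D l`, which is `N(l + 2, D)`.
-/

open MvPolynomial Module Nat

theorem Finsupp.prod_factorial_eq_mul_prod_factorial_sub_single {σ : Type*} (a : σ →₀ ℕ)
    {i : σ} (hi : a i ≠ 0) :
    (a.prod fun _ k => k !) = a i * (a - single i 1).prod fun _ k => k ! := by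
  have herase : erase i (a - single i 1) = erase i a := by
    ext j
    by_cases hj : j = i
    · simp [hj]
    · simp [erase_ne hj, Ne.symm hj]
  rw [← mul_prod_erase' a i _ (fun _ => factorial_zero),
    ← mul_prod_erase' (a - single i 1) i _ (fun _ => factorial_zero), herase, ← mul_assoc]
  congr 1
  rw [tsub_apply, single_eq_same, ← mul_factorial_pred hi]

namespace MvPolynomial

instance finite_homogeneousSubmodule {σ R : Type*} [Finite σ] [CommSemiring R]
    (n : ℕ) : Module.Finite R (homogeneousSubmodule σ R n) :=
  Module.Finite.iff_fg.mpr (homogeneousSubmodule_fg σ R n)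

theorem finrank_homogeneousSubmodule {σ R : Type*} [Fintype σ] [CommRing R] [Nontrivial R]
    (n : ℕ) : finrank R (homogeneousSubmodule σ R n) = (Fintype.card σ).multichoose n := by
  classical
  have hdeg : {d : σ →₀ ℕ | d.degree = n} = ↑(Finset.univ.finsuppAntidiag (ι := σ) n) := by
    ext d
    simp [Finsupp.degree_eq_sum]
  rw [homogeneousSubmodule_eq_finsupp_supported, hdeg,
    (AddMonoidAlgebra.supportedEquivFinsupp _).finrank_eq, finrank_finsupp_self]
  simp [Finset.card_finsuppAntidiag_nat_eq_multichoose]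

section FischerForm

variable {σ R : Type*} [CommRing R]

noncomputable def fischerForm : MvPolynomial σ R →ₗ[R] MvPolynomial σ R →ₗ[R] R :=
  Finsupp.lsum R (fun a => LinearMap.toSpanSingleton R _
      (((a.prod fun _ k => k ! : ℕ) : R) • lcoeff R a)) ∘ₗ
    (AddMonoidAlgebra.coeffLinearEquiv R).toLinearMap

theorem fischerForm_apply (P Q : MvPolynomial σ R) :
    fischerForm P Q
      = ∑ a ∈ P.support, P.coeff a * ((a.prod fun _ k => k ! : ℕ) * Q.coeff a) := by
  simp [fischerForm, Finsupp.sum]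
  rfl

theorem fischerForm_monomial (a : σ →₀ ℕ) (c : R) (Q : MvPolynomial σ R) :
    fischerForm (monomial a c) Q = c * ((a.prod fun _ k => k ! : ℕ) * Q.coeff a) := by
  simp [fischerForm]

theorem fischerForm_pderiv (i : σ) (P Q : MvPolynomial σ R) :
    fischerForm (pderiv i P) Q = fischerForm P (X i * Q) := by
  classical
  induction P using MvPolynomial.induction_on' with
  | add p q hp hq => simp only [map_add, LinearMap.add_apply, hp, hq]
  | monomial a c =>
    rw [pderiv_monomial, fischerForm_monomial, fischerForm_monomial, coeff_X_mul']
    by_cases hi : a i = 0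
    · simp [hi]
    · rw [if_pos (Finsupp.mem_support_iff.mpr hi),
        Finsupp.prod_factorial_eq_mul_prod_factorial_sub_single a hi]
      push_cast
      ring

theorem fischerForm_self_pos [LinearOrder R] [IsStrictOrderedRing R] {P : MvPolynomial σ R}
    (hP : P ≠ 0) : 0 < fischerForm P P := by
  rw [fischerForm_apply]
  refine Finset.sum_pos (fun a ha => ?_) (support_nonempty.mpr hP)
  have hPa : P.coeff a ≠ 0 := mem_support_iff.mp ha
  have hfact : (0 : R) < (a.prod fun _ k => k ! : ℕ) := by
    exact_mod_cast Finset.prod_pos fun _ _ => factorial_pos _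
  rw [mul_left_comm]
  exact mul_pos hfact (mul_self_pos.mpr hPa)

end FischerForm

end MvPolynomial

theorem fischerForm_polyLaplacian {D : ℕ} (P Q : MvPolynomial (Fin D) ℝ) :
    fischerForm (polyLaplacian D P) Q = fischerForm P ((∑ i, X i ^ 2) * Q) := by
  simp only [polyLaplacian, LinearMap.sum_apply, map_sum, Finset.sum_mul]
  refine Finset.sum_congr rfl fun i _ => ?_
  simp only [LinearMap.comp_apply, Derivation.coeFn_coe]
  rw [fischerForm_pderiv, fischerForm_pderiv, ← mul_assoc, ← pow_two]

theorem polyLaplacian_mem_homogeneousSubmodule {D n : ℕ} {P : MvPolynomial (Fin D) ℝ}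
    (hP : P ∈ homogeneousSubmodule (Fin D) ℝ (n + 2)) :
    polyLaplacian D P ∈ homogeneousSubmodule (Fin D) ℝ n := by
  rw [polyLaplacian, LinearMap.sum_apply]
  exact Submodule.sum_mem _ fun i _ => hP.pderiv.pderiv

theorem polyLaplacian_eq_zero_of_lt_two {D n : ℕ} (hn : n < 2) {P : MvPolynomial (Fin D) ℝ}
    (hP : P.IsHomogeneous n) : polyLaplacian D P = 0 := by
  rw [polyLaplacian, LinearMap.sum_apply]
  refine Finset.sum_eq_zero fun i _ => ?_
  have hconst : (pderiv i P).IsHomogeneous 0 := by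
    simpa [Nat.sub_eq_zero_of_le (by omega : n ≤ 1)] using hP.pderiv (i := i)
  rw [← totalDegree_zero_iff_isHomogeneous, totalDegree_eq_zero_iff_eq_C] at hconst
  simp only [LinearMap.comp_apply, Derivation.coeFn_coe]
  rw [hconst, pderiv_C]

theorem harmonicHomogeneous_eq_of_lt_two {D l : ℕ} (hl : l < 2) :
    harmonicHomogeneous D l = homogeneousSubmodule (Fin D) ℝ l :=
  inf_eq_left.mpr fun _ hP => polyLaplacian_eq_zero_of_lt_two hl hP

theorem eq_zero_of_polyLaplacian_sumSq_mul_eq_zero {D : ℕ} (hD : 0 < D)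
    {Q : MvPolynomial (Fin D) ℝ} (hQ : polyLaplacian D ((∑ i, X i ^ 2) * Q) = 0) : Q = 0 := by
  have hr2 : (∑ i : Fin D, X i ^ 2 : MvPolynomial (Fin D) ℝ) ≠ 0 := fun h => by
    simpa [hD.ne'] using congrArg (eval 1) h
  have hself : fischerForm ((∑ i, X i ^ 2) * Q) ((∑ i, X i ^ 2) * Q) = 0 := by
    rw [← fischerForm_polyLaplacian, hQ, map_zero, LinearMap.zero_apply]
  by_contra hQ0
  exact (fischerForm_self_pos (mul_ne_zero hr2 hQ0)).ne' hself

theorem finrank_harmonicHomogeneous_add_multichoose {D : ℕ} (hD : 0 < D) (l : ℕ) :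
    finrank ℝ (harmonicHomogeneous D (l + 2)) + D.multichoose l = D.multichoose (l + 2) := by
  set H : ℕ → Submodule ℝ (MvPolynomial (Fin D) ℝ) := homogeneousSubmodule (Fin D) ℝ
  have hr2 : (∑ i : Fin D, X i ^ 2 : MvPolynomial (Fin D) ℝ).IsHomogeneous 2 :=
    IsHomogeneous.sum _ _ _ fun i _ => isHomogeneous_X_pow i 2
  let Δ : H (l + 2) →ₗ[ℝ] H l :=
    (polyLaplacian D).restrict fun _ => polyLaplacian_mem_homogeneousSubmodule
  let μ : H l →ₗ[ℝ] H (l + 2) := (LinearMap.mulLeft ℝ (∑ i, X i ^ 2)).restrict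
    fun _ hQ => (mem_homogeneousSubmodule _ _).mpr (by simpa [add_comm] using hr2.mul hQ)
  have hinj : Function.Injective (Δ ∘ₗ μ) := by
    rw [← LinearMap.ker_eq_bot, eq_bot_iff]
    intro Q hQ
    exact Subtype.ext (eq_zero_of_polyLaplacian_sumSq_mul_eq_zero hD (congrArg Subtype.val hQ))
  have hsurj : Function.Surjective Δ := fun P =>
    let ⟨Q, hQ⟩ := LinearMap.injective_iff_surjective.mp hinj P
    ⟨μ Q, hQ⟩
  have hker : LinearMap.ker Δ = (harmonicHomogeneous D (l + 2)).comap (H (l + 2)).subtype := by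
    rw [LinearMap.ker_restrict, harmonicHomogeneous, Submodule.comap_inf,
      Submodule.comap_subtype_self, top_inf_eq]
  have := LinearMap.finrank_range_add_finrank_ker Δ
  rw [LinearMap.range_eq_top.mpr hsurj, finrank_top, hker,
    (Submodule.comapSubtypeEquivOfLe (p := harmonicHomogeneous D (l + 2)) inf_le_left).finrank_eq]
    at this
  simpa [H, finrank_homogeneousSubmodule, add_comm] using this

theorem Nat.multichoose_succ_mul_factorial_mul_factorial (n k : ℕ) :
    (n + 1).multichoose k * k ! * n ! = (n + k)! := by
  rw [multichoose_eq, Nat.add_right_comm, add_tsub_cancel_right]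
  simpa using choose_mul_factorial_mul_factorial (Nat.le_add_left k n)

theorem Nat.factorial_mul_factorial_mul_eq_of_add_multichoose_eq {d l N : ℕ}
    (hN : N + (d + 3).multichoose l = (d + 3).multichoose (l + 2)) :
    (d + 1)! * (l + 2)! * N = (2 * l + d + 5) * (d + l + 2)! := by
  have h0 : (d + 3).multichoose l * l ! * ((d + 2) * (d + 1)!) = (d + l + 2)! := by
    have h := multichoose_succ_mul_factorial_mul_factorial (d + 2) l
    rwa [factorial_succ (d + 1), add_right_comm d 2 l] at h
  have h2 : (d + 3).multichoose (l + 2) * (l + 2)! * ((d + 2) * (d + 1)!)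
      = (d + l + 4) * (d + l + 3) * (d + l + 2)! := by
    rw [← factorial_succ, multichoose_succ_mul_factorial_mul_factorial,
      show d + 2 + (l + 2) = d + l + 2 + 1 + 1 by ring, factorial_succ, factorial_succ]
    ring
  rw [factorial_succ (l + 1), factorial_succ l] at h2 ⊢
  apply Nat.eq_of_mul_eq_mul_left (show 0 < d + 2 by omega)
  zify at *
  linear_combination ((d + 2) * (d + 1)! * ((l + 2) * ((l + 1) * l !)) : ℤ) * hN + h2
    - ((l + 2) * (l + 1) : ℤ) * h0

/-- For `D ≥ 3`, the dimension of the space of harmonic homogeneous polynomials of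
degree `l` in `D` variables (= the space of spherical harmonics of order `l` in `D`
dimensions) is `N(l,D) = (2l + D − 2)·(l + D − 3)! / ((D − 2)!·l!)`; equivalently,
`(D−2)!·l!·dim = (2l + D − 2)·(l + D − 3)!`. -/
theorem dim_harmonic_homogeneous (D l : ℕ) (hD : 3 ≤ D) :
    (D - 2).factorial * l.factorial
        * Module.finrank ℝ (harmonicHomogeneous D l)
      = (2 * l + D - 2) * (l + D - 3).factorial := by
  obtain ⟨d, rfl⟩ := Nat.exists_eq_add_of_le' hD
  rcases l with _ | _ | l
  · rw [harmonicHomogeneous_eq_of_lt_two (by norm_num), finrank_homogeneousSubmodule]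
    simp [factorial_succ]
  · rw [harmonicHomogeneous_eq_of_lt_two (by norm_num), finrank_homogeneousSubmodule,
      show 1 + (d + 3) - 3 = d + 1 by omega]
    simp [mul_comm]
  · rw [show 2 * (l + 2) + (d + 3) - 2 = 2 * l + d + 5 by omega,
      show l + 2 + (d + 3) - 3 = d + l + 2 by omega]
    exact factorial_mul_factorial_mul_eq_of_add_multichoose_eq
      (finrank_harmonicHomogeneous_add_multichoose (by omega) l)
end
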